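/- Every prime graph with at least three vertices contains an induced path on four vertices; equivalently, every graph with at least three vertices and no induced path on four vertices has a nontrivial module. -/

import Mathlib

/-- `(a,b,c,d)` is an induced path on four vertices in `G`: the vertices are distinct
and the only edges among them are `ab`, `bc`, `cd`. -/
def IsInducedP4 {X : Type*} (G : SimpleGraph X) (a b c d : X) : Prop :=
  a ≠ b ∧ a ≠ c ∧ a ≠ d ∧ b ≠ c ∧ b ≠ d ∧ c ≠ d ∧
  G.Adj a b ∧ G.Adj b c ∧ G.Adj c d ∧ ¬ G.Adj a c ∧ ¬ G.Adj a d ∧ ¬ G.Adj b d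

/-- A graph is `P4`-free if it has no induced path on four vertices. -/
def P4Free {X : Type*} (G : SimpleGraph X) : Prop :=
  ∀ a b c d : X, ¬ IsInducedP4 G a b c d

/-- `inc(x)`: the set of non-neighbours of `x` other than `x` itself. -/
def incSet {X : Type*} (G : SimpleGraph X) (x : X) : Set X :=
  {y | y ≠ x ∧ ¬ G.Adj x y}

/-- `N_x`: the neighbours of `x` which are adjacent to every element of `inc(x)`. -/
def NSet {X : Type*} (G : SimpleGraph X) (x : X) : Set X :=
  {y | G.Adj x y ∧ ∀ z ∈ incSet G x, G.Adj y z}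

/-- `A` is a module of `G`: every vertex outside `A` is adjacent to all of `A` or to none of `A`. -/
def IsModule {X : Type*} (G : SimpleGraph X) (A : Set X) : Prop :=
  ∀ v ∉ A, (∀ a ∈ A, G.Adj v a) ∨ (∀ a ∈ A, ¬ G.Adj v a)

/-- A cograph: every induced subgraph with at least two vertices is disconnected or has a
disconnected complement. -/
def Cograph {X : Type*} (G : SimpleGraph X) : Prop :=
  ∀ s : Set X, s.Nontrivial → ¬ (G.induce s).Connected ∨ ¬ ((G.induce s)ᶜ).Connected

/-- A graph is prime if all its modules are trivial. -/
def GraphPrime {X : Type*} (G : SimpleGraph X) : Prop :=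
  ∀ A : Set X, IsModule G A → A = ∅ ∨ (∃ a : X, A = {a}) ∨ A = Set.univ

/-! In a `P4`-free graph, for every vertex `z` the connected components of the subgraph
induced by the non-neighbours `inc(z)` of `z` are modules: a neighbour `v` of `z` adjacent to
exactly one end of an edge `uw` inside `inc(z)` would give the induced path `z v u w`. So an edge
`xy` together with a vertex `z` adjacent to neither end yields a nontrivial module, the component
of `x` in `inc(z)`. Since modules and `P4`-freeness pass to the complement, a path `x y z` with
`x` and `z` non-adjacent yields one too. Finally, two vertices `a, b` either form a module,
nontrivial once there is a third vertex, or some `v` is adjacent to exactly one of them, and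
`v, a, b` is one of these two configurations. -/

section Modules

variable {X : Type*} {G : SimpleGraph X}

lemma isInducedP4_of_adj {a b c d : X} (hab : G.Adj a b) (hbc : G.Adj b c) (hcd : G.Adj c d)
    (hac : ¬ G.Adj a c) (had : ¬ G.Adj a d) (hbd : ¬ G.Adj b d) : IsInducedP4 G a b c d := by
  refine ⟨hab.ne, ?_, ?_, hbc.ne, ?_, hcd.ne, hab, hbc, hcd, hac, had, hbd⟩
  · rintro rfl; exact had hcd
  · rintro rfl; exact hac hcd.symm
  · rintro rfl; exact had hab

lemma P4Free.compl (h : P4Free G) : P4Free Gᶜ := by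
  rintro a b c d ⟨-, hac, had, -, hbd, -, hab, hbc, hcd, hnac, hnad, hnbd⟩
  simp only [SimpleGraph.compl_adj, not_and, not_not] at *
  exact h c a d b (isInducedP4_of_adj (hnac hac).symm (hnad had) (hnbd hbd).symm
    hcd.2 (fun e => hbc.2 e.symm) hab.2)

lemma IsModule.of_compl {A : Set X} (h : IsModule Gᶜ A) : IsModule G A := by
  intro v hv
  have hne : ∀ a ∈ A, v ≠ a := fun a ha e => hv (e ▸ ha)
  rcases h v hv with hadj | hnadj
  · exact Or.inr fun a ha => ((G.compl_adj v a).1 (hadj a ha)).2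
  · exact Or.inl fun a ha =>
      not_not.1 fun hn => hnadj a ha ((G.compl_adj v a).2 ⟨hne a ha, hn⟩)

lemma not_trivial_of_mem {A : Set X} {u w t : X} (hu : u ∈ A) (hw : w ∈ A) (huw : u ≠ w)
    (ht : t ∉ A) : ¬ (A = ∅ ∨ (∃ a : X, A = {a}) ∨ A = Set.univ) := by
  rintro (rfl | ⟨a, rfl⟩ | rfl)
  · exact hu
  · exact huw (hu.trans hw.symm)
  · exact ht (Set.mem_univ t)

/-- The connected component of `x` in the subgraph induced by `inc(z)`, when `x ∈ inc(z)`. -/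
def incComponent (G : SimpleGraph X) (z x : X) : Set X :=
  {c | Relation.ReflTransGen (fun u w => G.Adj u w ∧ w ∈ incSet G z) x c}

lemma incComponent_subset {z x : X} (hx : x ∈ incSet G z) :
    incComponent G z x ⊆ incSet G z := by
  intro c hc
  induction hc with
  | refl => exact hx
  | tail _ step => exact step.2

lemma P4Free.adj_iff_adj_of_adj (h : P4Free G) {z v u w : X} (hzv : G.Adj z v)
    (hu : u ∈ incSet G z) (hw : w ∈ incSet G z) (huw : G.Adj u w) :
    G.Adj v u ↔ G.Adj v w := by
  constructor
  · intro hvu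
    by_contra hvw
    exact h z v u w (isInducedP4_of_adj hzv hvu huw hu.2 hw.2 hvw)
  · intro hvw
    by_contra hvu
    exact h z v w u (isInducedP4_of_adj hzv hvw huw.symm hw.2 hu.2 hvu)

lemma P4Free.isModule_incComponent (h : P4Free G) {z x : X} (hx : x ∈ incSet G z) :
    IsModule G (incComponent G z x) := by
  intro v hv
  by_cases hzv : G.Adj z v
  · have hconst : ∀ c ∈ incComponent G z x, G.Adj v c ↔ G.Adj v x := by
      intro c hc
      induction hc with
      | refl => rfl
      | @tail u w hxu step ih =>
        exact (h.adj_iff_adj_of_adj hzv (incComponent_subset hx hxu) step.2 step.1).symm.trans ih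
    by_cases hvx : G.Adj v x
    · exact Or.inl fun c hc => (hconst c hc).2 hvx
    · exact Or.inr fun c hc hvc => hvx ((hconst c hc).1 hvc)
  · refine Or.inr fun c hc hvc => ?_
    by_cases hvz : v = z
    · subst hvz
      exact (incComponent_subset hx hc).2 hvc
    · exact hv (Relation.ReflTransGen.tail hc ⟨hvc.symm, hvz, hzv⟩)

lemma P4Free.exists_nontrivial_module_of_adj (h : P4Free G) {x y z : X} (hxy : G.Adj x y)
    (hx : x ∈ incSet G z) (hy : y ∈ incSet G z) :
    ∃ A : Set X, IsModule G A ∧ ¬ (A = ∅ ∨ (∃ a : X, A = {a}) ∨ A = Set.univ) :=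
  ⟨incComponent G z x, h.isModule_incComponent hx,
    not_trivial_of_mem Relation.ReflTransGen.refl (Relation.ReflTransGen.single ⟨hxy, hy⟩)
      hxy.ne fun hz => (incComponent_subset hx hz).1 rfl⟩

lemma P4Free.exists_nontrivial_module_of_adj_of_not_adj (h : P4Free G) {v a b : X}
    (hab : a ≠ b) (hvb : v ≠ b) (hva : G.Adj v a) (hnvb : ¬ G.Adj v b) :
    ∃ A : Set X, IsModule G A ∧ ¬ (A = ∅ ∨ (∃ a : X, A = {a}) ∨ A = Set.univ) := by
  by_cases hab' : G.Adj a b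
  · -- in the complement, `v b` is an edge and `a` is adjacent to neither end
    obtain ⟨A, hA, hnt⟩ := h.compl.exists_nontrivial_module_of_adj (z := a)
      ((G.compl_adj v b).2 ⟨hvb, hnvb⟩)
      ⟨hva.ne, fun e => ((G.compl_adj a v).1 e).2 hva.symm⟩
      ⟨hab.symm, fun e => ((G.compl_adj a b).1 e).2 hab'⟩
    exact ⟨A, hA.of_compl, hnt⟩
  · exact h.exists_nontrivial_module_of_adj hva ⟨hvb, fun e => hnvb e.symm⟩
      ⟨hab, fun e => hab' e.symm⟩

lemma P4Free.exists_nontrivial_module (h : P4Free G)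
    (hcard : ∃ a b c : X, a ≠ b ∧ a ≠ c ∧ b ≠ c) :
    ∃ A : Set X, IsModule G A ∧ ¬ (A = ∅ ∨ (∃ a : X, A = {a}) ∨ A = Set.univ) := by
  obtain ⟨a, b, c, hab, hac, hbc⟩ := hcard
  by_cases hpair : IsModule G {a, b}
  · exact ⟨{a, b}, hpair, not_trivial_of_mem (t := c) (Set.mem_insert a {b})
      (Set.mem_insert_of_mem a rfl) hab (by simp [hac.symm, hbc.symm])⟩
  simp only [IsModule, Set.mem_insert_iff, Set.mem_singleton_iff, not_or, forall_eq_or_imp,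
    forall_eq, not_forall] at hpair
  obtain ⟨v, ⟨hva, hvb⟩, hmixed⟩ := hpair
  by_cases hadj : G.Adj v a
  · exact h.exists_nontrivial_module_of_adj_of_not_adj hab hvb hadj
      fun hvb' => hmixed.1 ⟨hadj, hvb'⟩
  · exact h.exists_nontrivial_module_of_adj_of_not_adj hab.symm hva
      (by_contra fun hvb' => hmixed.2 ⟨hadj, hvb'⟩) hadj

end Modules

theorem prime_has_P4_and_P4Free_has_nontrivial_module
    {X : Type*} (G : SimpleGraph X)
    (hcard : ∃ a b c : X, a ≠ b ∧ a ≠ c ∧ b ≠ c) :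
    (GraphPrime G → ∃ a b c d : X, IsInducedP4 G a b c d) ∧
    (P4Free G → ∃ A : Set X, IsModule G A ∧
      ¬ (A = ∅ ∨ (∃ a : X, A = {a}) ∨ A = Set.univ)) := by
  refine ⟨fun hprime => ?_, fun h => h.exists_nontrivial_module hcard⟩
  by_contra hnoP4
  have hfree : P4Free G := fun a b c d hP => hnoP4 ⟨a, b, c, d, hP⟩
  obtain ⟨A, hA, hnt⟩ := hfree.exists_nontrivial_module hcard
  exact hnt (hprime A hA)
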